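/- arXiv:1606.01987 — 10 statements merged into one kernel-verified Lean document; each statement's English description precedes it below -/
import Mathlib

section
/- Suppose R_0 > 1. Then the point (V_i*, H_i*) with V_i* = (β_v β_h N_v* − r_v(1−q) N_h*(d_h+γ_h)) / (β_v β_h + r_v(1−q) β_h) and H_i* = β_h V_i* / (β_h V_i*/N_h* + d_h + γ_h) satisfies 0 < V_i* < N_v*, 0 < H_i* < N_h*, and f_1(V_i*, H_i*) = 0 and f_2(V_i*, H_i*) = 0; that is, (V_i*, H_i*) is a positive equilibrium (endemic equilibrium) of the kinetic West Nile virus system dV/dt = f_1(V,H), dH/dt = f_2(V,H). -/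
/-!
For fixed `V > 0` the host (bird) equation `f₂ = 0` is linear in `H`, with the unique root
`H = s / (s / Nh + b)` (`s = βh V`, `b = dh + γh`), which lies strictly between `0` and `Nh`.
Substituting it into `f₁ = 0` and cancelling `V` leaves an equation linear in `V` whose root
is `V*`; its numerator `βv βh Nv - rv (1 - q) Nh (dh + γh)` is positive exactly when `R₀ > 1`,
and `V* < Nv` holds for all positive parameters.
-/

namespace WestNile

theorem lt_of_one_lt_sqrt_div {n d : ℝ} (hd : 0 < d) (h : 1 < √(n / d)) : d < n := by
  rw [Real.lt_sqrt zero_le_one, one_pow, one_lt_div hd] at h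
  exact h

section Host

variable {s b N : ℝ}

theorem host_equilibrium_pos (hs : 0 < s) (hb : 0 < b) (hN : 0 < N) : 0 < s / (s / N + b) := by
  positivity

theorem host_equilibrium_lt (hs : 0 < s) (hb : 0 < b) (hN : 0 < N) : s / (s / N + b) < N := by
  rw [div_lt_iff₀ (by positivity), mul_add, mul_div_cancel₀ s hN.ne']
  linarith [mul_pos hN hb]

theorem host_rate_eq_zero (hN : N ≠ 0) (hden : s / N + b ≠ 0) :
    s * (N - s / (s / N + b)) / N - b * (s / (s / N + b)) = 0 := by
  have hH : s / (s / N + b) * (s / N + b) = s := div_mul_cancel₀ s hden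
  generalize s / (s / N + b) = H at hH ⊢
  field_simp at hH ⊢
  linear_combination -hH

end Host

section Vector

variable {βv βh a b Nv Nh : ℝ}

theorem vector_equilibrium_pos (hβv : 0 < βv) (hβh : 0 < βh) (ha : 0 < a)
    (hR : a * Nh * b < βv * βh * Nv) :
    0 < (βv * βh * Nv - a * Nh * b) / (βv * βh + a * βh) :=
  div_pos (sub_pos.2 hR) (by positivity)

theorem vector_equilibrium_lt (hβv : 0 < βv) (hβh : 0 < βh) (ha : 0 < a) (hb : 0 < b)
    (hNv : 0 < Nv) (hNh : 0 < Nh) :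
    (βv * βh * Nv - a * Nh * b) / (βv * βh + a * βh) < Nv := by
  rw [div_lt_iff₀ (by positivity)]
  nlinarith [mul_pos ha (add_pos (mul_pos hNh hb) (mul_pos hβh hNv))]

theorem vector_rate_eq_zero {V : ℝ} (hβh : βh ≠ 0) (hNh : Nh ≠ 0) (hden : βh * V / Nh + b ≠ 0)
    (hV : V * (βv * βh + a * βh) = βv * βh * Nv - a * Nh * b) :
    βv * (Nv - V) * (βh * V / (βh * V / Nh + b)) / Nh - a * V = 0 := by
  have hH : βh * V / (βh * V / Nh + b) * (βh * V / Nh + b) = βh * V := div_mul_cancel₀ _ hden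
  generalize βh * V / (βh * V / Nh + b) = H at hH ⊢
  field_simp at hH ⊢
  refine mul_left_cancel₀ hβh ?_
  linear_combination (-H) * hV + a * hH

end Vector

end WestNile

open WestNile in
theorem endemic_equilibrium_exists_general
    (βv βh rv dh γh Nv Nh q : ℝ)
    (hβv : 0 < βv) (hβh : 0 < βh) (hrv : 0 < rv) (hdh : 0 < dh) (hγh : 0 < γh)
    (hNv : 0 < Nv) (hNh : 0 < Nh) (hq1 : q < 1)
    (hR0 : 1 < Real.sqrt (βv * βh * Nv / (rv * (1 - q) * Nh * (dh + γh))))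
    (Vstar Hstar : ℝ)
    (hV : Vstar = (βv * βh * Nv - rv * (1 - q) * Nh * (dh + γh)) /
        (βv * βh + rv * (1 - q) * βh))
    (hH : Hstar = βh * Vstar / (βh * Vstar / Nh + dh + γh)) :
    0 < Vstar ∧ Vstar < Nv ∧ 0 < Hstar ∧ Hstar < Nh ∧
    βv * (Nv - Vstar) * Hstar / Nh - rv * (1 - q) * Vstar = 0 ∧
    βh * Vstar * (Nh - Hstar) / Nh - (dh + γh) * Hstar = 0 := by
  have ha : 0 < rv * (1 - q) := mul_pos hrv (sub_pos.2 hq1)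
  have hb : 0 < dh + γh := add_pos hdh hγh
  have hR : rv * (1 - q) * Nh * (dh + γh) < βv * βh * Nv :=
    lt_of_one_lt_sqrt_div (by positivity) hR0
  have hVpos : 0 < Vstar := hV ▸ vector_equilibrium_pos hβv hβh ha hR
  have hVeq : Vstar * (βv * βh + rv * (1 - q) * βh) =
      βv * βh * Nv - rv * (1 - q) * Nh * (dh + γh) := by
    rw [hV]
    exact div_mul_cancel₀ _ (by positivity)
  have hs : 0 < βh * Vstar := mul_pos hβh hVpos
  rw [add_assoc] at hH
  subst hH
  exact ⟨hVpos, hV ▸ vector_equilibrium_lt hβv hβh ha hb hNv hNh,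
    host_equilibrium_pos hs hb hNh, host_equilibrium_lt hs hb hNh,
    vector_rate_eq_zero hβh.ne' hNh.ne' (by positivity) hVeq,
    host_rate_eq_zero hNh.ne' (by positivity)⟩

/-- If `R₀ > 1`, the endemic equilibrium `(Vi*, Hi*)` is a positive
equilibrium of the kinetic West Nile virus system. -/
theorem endemic_equilibrium_exists
    (βv βh rv dh γh Nv Nh q : ℝ)
    (hβv : 0 < βv) (hβh : 0 < βh) (hrv : 0 < rv) (hdh : 0 < dh) (hγh : 0 < γh)
    (hNv : 0 < Nv) (hNh : 0 < Nh) (hq0 : 0 ≤ q) (hq1 : q < 1)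
    (hR0 : 1 < Real.sqrt (βv * βh * Nv / (rv * (1 - q) * Nh * (dh + γh))))
    (Vstar Hstar : ℝ)
    (hV : Vstar = (βv * βh * Nv - rv * (1 - q) * Nh * (dh + γh)) /
        (βv * βh + rv * (1 - q) * βh))
    (hH : Hstar = βh * Vstar / (βh * Vstar / Nh + dh + γh)) :
    0 < Vstar ∧ Vstar < Nv ∧ 0 < Hstar ∧ Hstar < Nh ∧
    βv * (Nv - Vstar) * Hstar / Nh - rv * (1 - q) * Vstar = 0 ∧
    βh * Vstar * (Nh - Hstar) / Nh - (dh + γh) * Hstar = 0 :=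
  endemic_equilibrium_exists_general βv βh rv dh γh Nv Nh q hβv hβh hrv hdh hγh hNv hNh hq1 hR0
    Vstar Hstar hV hH
end

section
/- Suppose R_0 ≤ 1. If a pair of real numbers (V,H) satisfies f_1(V,H) = 0 and f_2(V,H) = 0 with 0 ≤ V ≤ N_v* and 0 ≤ H ≤ N_h*, then V = 0 and H = 0; that is, the disease-free equilibrium (0,0) is the only equilibrium of the kinetic West Nile virus system in the biologically relevant box. -/
set_option maxHeartbeats 1000000

/-- If `R₀ ≤ 1`, the disease-free equilibrium `(0,0)` is the only
equilibrium of the kinetic West Nile virus system in the biologically relevant box. -/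
theorem disease_free_unique_equilibrium
    (βv βh rv dh γh Nv Nh q : ℝ)
    (hβv : 0 < βv) (hβh : 0 < βh) (hrv : 0 < rv) (hdh : 0 < dh) (hγh : 0 < γh)
    (hNv : 0 < Nv) (hNh : 0 < Nh) (hq0 : 0 ≤ q) (hq1 : q < 1)
    (hR0 : Real.sqrt (βv * βh * Nv / (rv * (1 - q) * Nh * (dh + γh))) ≤ 1)
    (V H : ℝ) (hV0 : 0 ≤ V) (hVN : V ≤ Nv) (hH0 : 0 ≤ H) (hHN : H ≤ Nh)
    (hf1 : βv * (Nv - V) * H / Nh - rv * (1 - q) * V = 0)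
    (hf2 : βh * V * (Nh - H) / Nh - (dh + γh) * H = 0) :
    V = 0 ∧ H = 0 := by
  have hq : 0 < 1 - q := by linarith
  have hD : 0 < rv * (1 - q) * Nh * (dh + γh) := by positivity
  have harg : 0 ≤ βv * βh * Nv / (rv * (1 - q) * Nh * (dh + γh)) := by positivity
  have hle1 : βv * βh * Nv / (rv * (1 - q) * Nh * (dh + γh)) ≤ 1 := by
    nlinarith [Real.sq_sqrt harg, Real.sqrt_nonneg (βv * βh * Nv / (rv * (1 - q) * Nh * (dh + γh)))]
  have hkey : βv * βh * Nv ≤ rv * (1 - q) * Nh * (dh + γh) := by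
    rw [div_le_one hD] at hle1; exact hle1
  have hNh' : Nh ≠ 0 := ne_of_gt hNh
  have he1 : βv * (Nv - V) * H = rv * (1 - q) * V * Nh := by
    field_simp at hf1; linarith
  have he2 : βh * V * (Nh - H) = (dh + γh) * H * Nh := by
    field_simp at hf2; linarith
  rcases eq_or_lt_of_le hH0 with hH | hH
  · have hV : V = 0 := by
      have : rv * (1 - q) * V * Nh = 0 := by rw [← he1, ← hH]; ring
      have := mul_eq_zero.mp this
      rcases this with h | h
      · rcases mul_eq_zero.mp h with h' | h'
        · exact absurd h' (by positivity)
        · exact h'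
      · exact absurd h hNh'
    exact ⟨hV, hH.symm⟩
  · exfalso
    rcases eq_or_lt_of_le hV0 with hV | hV
    · -- V = 0 forces H = 0, contradiction
      have : (dh + γh) * H * Nh = 0 := by rw [← he2, ← hV]; ring
      nlinarith [mul_pos (mul_pos (by linarith : (0:ℝ) < dh + γh) hH) hNh]
    · -- both positive: multiply equations
      have hmul : βv * βh * (Nv - V) * (Nh - H) * (V * H)
          = rv * (1 - q) * (dh + γh) * Nh ^ 2 * (V * H) := by
        linear_combination (βh * V * (Nh - H)) * he1 + (rv * (1 - q) * V * Nh) * he2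
      have hVH : 0 < V * H := mul_pos hV hH
      have hcancel : βv * βh * (Nv - V) * (Nh - H)
          = rv * (1 - q) * (dh + γh) * Nh ^ 2 := mul_right_cancel₀ (ne_of_gt hVH) hmul
      have hA : βv * βh * (Nv - V) * (Nh - H) ≤ βv * βh * Nv * (Nh - H) := by
        nlinarith [mul_nonneg (mul_nonneg (mul_pos hβv hβh).le (sub_nonneg.mpr hHN)) hV0]
      have hB : βv * βh * Nv * (Nh - H) < βv * βh * Nv * Nh := by
        nlinarith [mul_pos (mul_pos (mul_pos hβv hβh) hNv) hH]
      have hC : βv * βh * Nv * Nh ≤ rv * (1 - q) * (dh + γh) * Nh ^ 2 := by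
        have h := mul_le_mul_of_nonneg_right hkey hNh.le
        nlinarith [h]
      linarith
end

section
/- Suppose R_0 > 1. If a pair of real numbers (V,H) satisfies f_1(V,H) = 0 and f_2(V,H) = 0 with 0 < V ≤ N_v* and 0 < H ≤ N_h*, then V = V_i* and H = H_i*; that is, the positive (endemic) equilibrium of the kinetic West Nile virus system is unique. -/
/-- If `R₀ > 1`, the positive (endemic) equilibrium of the kinetic
West Nile virus system is unique. -/
theorem endemic_equilibrium_unique
    (βv βh rv dh γh Nv Nh q : ℝ)
    (hβv : 0 < βv) (hβh : 0 < βh) (hrv : 0 < rv) (hdh : 0 < dh) (hγh : 0 < γh)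
    (hNv : 0 < Nv) (hNh : 0 < Nh) (hq0 : 0 ≤ q) (hq1 : q < 1)
    (hR0 : 1 < Real.sqrt (βv * βh * Nv / (rv * (1 - q) * Nh * (dh + γh))))
    (Vstar Hstar : ℝ)
    (hVstar : Vstar = (βv * βh * Nv - rv * (1 - q) * Nh * (dh + γh)) /
        (βv * βh + rv * (1 - q) * βh))
    (hHstar : Hstar = βh * Vstar / (βh * Vstar / Nh + dh + γh))
    (V H : ℝ) (hV0 : 0 < V) (hVN : V ≤ Nv) (hH0 : 0 < H) (hHN : H ≤ Nh)
    (hf1 : βv * (Nv - V) * H / Nh - rv * (1 - q) * V = 0)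
    (hf2 : βh * V * (Nh - H) / Nh - (dh + γh) * H = 0) :
    V = Vstar ∧ H = Hstar := by
  have hNh' : (Nh : ℝ) ≠ 0 := ne_of_gt hNh
  have h1q : 0 < 1 - q := by linarith
  -- clear denominators
  have eq1 : βv * (Nv - V) * H = rv * (1 - q) * V * Nh := by
    field_simp at hf1; linarith
  have eq2 : βh * V * (Nh - H) = (dh + γh) * H * Nh := by
    field_simp at hf2; linarith
  -- key quadratic identity
  have hkey : V * Nh * (βv * βh * (Nv - V) - rv * (1 - q) * (βh * V + Nh * (dh + γh))) = 0 := by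
    linear_combination (βh * V + Nh * (dh + γh)) * eq1 + βv * (Nv - V) * eq2
  have hVNh : V * Nh ≠ 0 := ne_of_gt (mul_pos hV0 hNh)
  have hkey2 : βv * βh * (Nv - V) = rv * (1 - q) * (βh * V + Nh * (dh + γh)) := by
    rcases mul_eq_zero.mp hkey with h | h
    · exact absurd h hVNh
    · linarith
  have hden : 0 < βv * βh + rv * (1 - q) * βh := by positivity
  have hVeq : V = Vstar := by
    rw [hVstar]
    field_simp
    nlinarith [hkey2]
  have hVs0 : 0 < Vstar := hVeq ▸ hV0
  have hden2 : βh * Vstar / Nh + dh + γh ≠ 0 := by positivity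
  have hden3 : βh * V / Nh + dh + γh ≠ 0 := by positivity
  have hHeq : H = Hstar := by
    rw [hHstar, ← hVeq, eq_div_iff hden3]
    field_simp
    linarith [eq2]
  exact ⟨hVeq, hHeq⟩
end

section
/- With A = D_v λ* + r_v(1−q), B = D_h λ* + d_h + γ_h, R* = (β_v β_h N_v*/N_h*) / (A B) and λ_0 = ((A+B) − sqrt((A+B)² + 4AB(R*−1)))/2, the discriminant satisfies (A+B)² + 4AB(R*−1) = (A−B)² + 4ABR* > 0, and 1 − sqrt(R*) has the same sign as λ_0: λ_0 > 0 if and only if R* < 1, λ_0 = 0 if and only if R* = 1, and λ_0 < 0 if and only if R* > 1. -/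
/-- Discriminant identity and the sign relation between `λ₀` and
`1 - √R*`. -/
theorem lambda0_sign
    (βv βh rv dh γh Nv Nh q Dv Dh lamStar : ℝ)
    (hβv : 0 < βv) (hβh : 0 < βh) (hrv : 0 < rv) (hdh : 0 < dh) (hγh : 0 < γh)
    (hNv : 0 < Nv) (hNh : 0 < Nh) (hq0 : 0 ≤ q) (hq1 : q < 1)
    (hDv : 0 < Dv) (hDh : 0 < Dh) (hlam : 0 < lamStar)
    (A B Rstar lam0 : ℝ)
    (hA : A = Dv * lamStar + rv * (1 - q))
    (hB : B = Dh * lamStar + dh + γh)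
    (hRstar : Rstar = (βv * βh * Nv / Nh) / (A * B))
    (hlam0 : lam0 = ((A + B) - Real.sqrt ((A + B) ^ 2 + 4 * A * B * (Rstar - 1))) / 2) :
    ((A + B) ^ 2 + 4 * A * B * (Rstar - 1) = (A - B) ^ 2 + 4 * A * B * Rstar) ∧
    (0 < (A + B) ^ 2 + 4 * A * B * (Rstar - 1)) ∧
    (0 < lam0 ↔ Rstar < 1) ∧ (lam0 = 0 ↔ Rstar = 1) ∧ (lam0 < 0 ↔ 1 < Rstar) := by
  have h1q : 0 < 1 - q := by linarith
  have hApos : 0 < A := by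
    rw [hA]; positivity
  have hBpos : 0 < B := by
    rw [hB]; positivity
  have hRpos : 0 < Rstar := by
    rw [hRstar]
    exact div_pos (div_pos (by positivity) hNh) (mul_pos hApos hBpos)
  have hid : (A + B) ^ 2 + 4 * A * B * (Rstar - 1) = (A - B) ^ 2 + 4 * A * B * Rstar := by
    ring
  have hDpos : 0 < (A + B) ^ 2 + 4 * A * B * (Rstar - 1) := by
    rw [hid]
    have : 0 < 4 * A * B * Rstar := by positivity
    nlinarith [sq_nonneg (A - B)]
  set D := (A + B) ^ 2 + 4 * A * B * (Rstar - 1) with hD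
  have hABpos : 0 < A + B := by linarith
  have hpos : 0 < lam0 ↔ Rstar < 1 := by
    rw [hlam0]
    constructor
    · intro h
      have hs : Real.sqrt D < A + B := by linarith
      have hlt : D < (A + B) ^ 2 := by
        have h2 : Real.sqrt D ^ 2 < (A + B) ^ 2 :=
          pow_lt_pow_left₀ hs (Real.sqrt_nonneg D) two_ne_zero
        rwa [Real.sq_sqrt hDpos.le] at h2
      rw [hD] at hlt
      have h4 : A * B * (Rstar - 1) < 0 := by linarith
      nlinarith [mul_pos hApos hBpos]
    · intro h
      have hlt : D < (A + B) ^ 2 := by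
        rw [hD]
        have h4 : A * B * (Rstar - 1) < 0 :=
          mul_neg_of_pos_of_neg (mul_pos hApos hBpos) (by linarith)
        linarith
      have hs : Real.sqrt D < A + B := by
        rw [show (A + B) = Real.sqrt ((A + B) ^ 2) by
          rw [Real.sqrt_sq hABpos.le]]
        exact Real.sqrt_lt_sqrt hDpos.le hlt
      linarith
  have hneg : lam0 < 0 ↔ 1 < Rstar := by
    rw [hlam0]
    constructor
    · intro h
      have hs : A + B < Real.sqrt D := by linarith
      have hlt : (A + B) ^ 2 < D := by
        have h2 : (A + B) ^ 2 < Real.sqrt D ^ 2 :=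
          pow_lt_pow_left₀ hs hABpos.le two_ne_zero
        rwa [Real.sq_sqrt hDpos.le] at h2
      rw [hD] at hlt
      have h4 : 0 < A * B * (Rstar - 1) := by linarith
      nlinarith [mul_pos hApos hBpos]
    · intro h
      have hlt : (A + B) ^ 2 < D := by
        rw [hD]
        have h4 : 0 < A * B * (Rstar - 1) := by
          apply mul_pos (mul_pos hApos hBpos); linarith
        linarith
      have hs : A + B < Real.sqrt D := by
        rw [show (A + B) = Real.sqrt ((A + B) ^ 2) by
          rw [Real.sqrt_sq hABpos.le]]
        exact Real.sqrt_lt_sqrt (by positivity) hlt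
      linarith
  refine ⟨hid, hDpos, hpos, ?_, hneg⟩
  constructor
  · intro h
    rcases lt_trichotomy Rstar 1 with h1 | h1 | h1
    · exact absurd (hpos.mpr h1) (by simp [h])
    · exact h1
    · exact absurd (hneg.mpr h1) (by simp [h])
  · intro h
    rcases lt_trichotomy lam0 0 with h1 | h1 | h1
    · exact absurd (hneg.mp h1) (by simp [h])
    · exact h1
    · exact absurd (hpos.mp h1) (by simp [h])
end

section
/- Let h_0 > 0, λ* = (π/(2h_0))², ψ*(x) = cos(π x/(2h_0)), R_0^D = sqrt((β_v β_h N_v*/N_h*) / ((D_h λ* + d_h + γ_h)(D_v λ* + r_v(1−q)))), and φ*(x) = (β_v N_v* / (N_h* R_0^D (D_v λ* + r_v(1−q)))) ψ*(x). Then φ* and ψ* are strictly positive on (−h_0, h_0), vanish at x = ±h_0, and for every x ∈ (−h_0, h_0) the second-derivative identities −D_v φ*''(x) = (β_v N_v*/(N_h* R_0^D)) ψ*(x) − r_v(1−q) φ*(x) and −D_h ψ*''(x) = (β_h / R_0^D) φ*(x) − (d_h+γ_h) ψ*(x) hold; i.e. (φ*, ψ*) is a positive solution of the Dirichlet eigenvalue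 system on (−h_0, h_0) with eigenvalue parameter R_0^D. -/
/-!
Both components are multiples of the principal Dirichlet mode `ψ* = cos (k x)`, `k = π / (2 h₀)`,
which is positive on `(-h₀, h₀)`, vanishes at `±h₀` and satisfies `ψ*'' = -λ* ψ*` with `λ* = k²`.
With `φ* = c ψ*`, each equation of the system reduces to a scalar identity: the first holds by
the choice of `c`, and the second is equivalent to `(R₀ᴰ)² = βᵥ βₕ Nᵥ / (Nₕ A B)`, where
`A = Dₕ λ* + dₕ + γₕ` and `B = Dᵥ λ* + rᵥ (1 - q)`, which is the definition of `R₀ᴰ`.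
-/

open Real Set

lemma deriv_deriv_cos_const_mul (k : ℝ) :
    deriv (deriv fun x => cos (k * x)) = fun x => -k ^ 2 * cos (k * x) := by
  have hcos (x : ℝ) : HasDerivAt (fun x => cos (k * x)) (-sin (k * x) * k) x :=
    (hasDerivAt_const_mul k).cos
  have hsin (x : ℝ) : HasDerivAt (fun x => -sin (k * x) * k) (-k ^ 2 * cos (k * x)) x := by
    rw [show -k ^ 2 * cos (k * x) = -(cos (k * x) * k) * k by ring]
    exact (hasDerivAt_const_mul k).sin.neg.mul_const k
  funext x
  rw [funext fun x => (hcos x).deriv, (hsin x).deriv]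

lemma cos_pi_div_two_mul_self {h : ℝ} (hh : h ≠ 0) : cos (π / (2 * h) * h) = 0 := by
  rw [div_mul_eq_mul_div, mul_div_mul_right _ _ hh, cos_pi_div_two]

lemma cos_pi_div_two_mul_pos {h x : ℝ} (hh : 0 < h) (hx : x ∈ Ioo (-h) h) :
    0 < cos (π / (2 * h) * x) := by
  have hk : 0 < π / (2 * h) := by positivity
  have hkh : π / (2 * h) * h = π / 2 := by field_simp
  apply cos_pos_of_mem_Ioo
  constructor <;> nlinarith [hx.1, hx.2]

lemma div_sq_sqrt_div_mul_eq {P A B : ℝ} (hP : 0 < P) (hA : 0 < A) (hB : 0 < B) :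
    P / (√(P / (A * B)) ^ 2 * B) = A := by
  rw [sq_sqrt (by positivity)]
  field_simp

theorem dirichlet_principal_eigenpair_general
    (βv βh rv dh γh Nv Nh q Dv Dh h0 : ℝ)
    (hβv : 0 < βv) (hβh : 0 < βh) (hrv : 0 < rv) (hdh : 0 < dh) (hγh : 0 < γh)
    (hNv : 0 < Nv) (hNh : 0 < Nh) (hq1 : q < 1)
    (hDv : 0 < Dv) (hDh : 0 < Dh) (hh0 : 0 < h0)
    (lamStar R0D : ℝ) (ψs φs : ℝ → ℝ)
    (hlam : lamStar = (Real.pi / (2 * h0)) ^ 2)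
    (hψ : ψs = fun x => Real.cos (Real.pi * x / (2 * h0)))
    (hR0D : R0D = Real.sqrt ((βv * βh * Nv / Nh) /
        ((Dh * lamStar + dh + γh) * (Dv * lamStar + rv * (1 - q)))))
    (hφ : φs = fun x => βv * Nv / (Nh * R0D * (Dv * lamStar + rv * (1 - q))) * ψs x) :
    (∀ x ∈ Set.Ioo (-h0) h0, 0 < φs x) ∧
    (∀ x ∈ Set.Ioo (-h0) h0, 0 < ψs x) ∧
    φs (-h0) = 0 ∧ φs h0 = 0 ∧ ψs (-h0) = 0 ∧ ψs h0 = 0 ∧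
    (∀ x ∈ Set.Ioo (-h0) h0,
      -Dv * deriv (deriv φs) x = βv * Nv / (Nh * R0D) * ψs x - rv * (1 - q) * φs x) ∧
    (∀ x ∈ Set.Ioo (-h0) h0,
      -Dh * deriv (deriv ψs) x = βh / R0D * φs x - (dh + γh) * ψs x) := by
  simp only [mul_div_right_comm π] at hψ
  set A := Dh * lamStar + dh + γh
  set B := Dv * lamStar + rv * (1 - q)
  have hlam_nonneg : 0 ≤ lamStar := hlam ▸ sq_nonneg _
  have hA : 0 < A := by positivity
  have hB : 0 < B := add_pos_of_nonneg_of_pos (by positivity) (mul_pos hrv (sub_pos.2 hq1))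
  have hR0D_pos : 0 < R0D := hR0D ▸ sqrt_pos.2 (by positivity)
  have hψ'' : deriv (deriv ψs) = fun x => -lamStar * ψs x := by
    rw [hψ, hlam, deriv_deriv_cos_const_mul]
  have hφ'' : deriv (deriv φs) = fun x => -lamStar * φs x := by
    simp only [hφ, deriv_const_mul_field', hψ'']
    ring_nf
  have hψ_pos (x : ℝ) (hx : x ∈ Ioo (-h0) h0) : 0 < ψs x := hψ ▸ cos_pi_div_two_mul_pos hh0 hx
  have hψ_right : ψs h0 = 0 := hψ ▸ cos_pi_div_two_mul_self hh0.ne'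
  have hψ_left : ψs (-h0) = 0 := by
    simpa only [hψ, mul_neg, cos_neg] using cos_pi_div_two_mul_self hh0.ne'
  have hcoupling : βh / R0D * (βv * Nv / (Nh * R0D * B)) = A := by
    rw [← div_sq_sqrt_div_mul_eq (P := βv * βh * Nv / Nh) (by positivity) hA hB, ← hR0D]
    field_simp
  refine ⟨fun x hx => ?_, hψ_pos, ?_, ?_, hψ_left, hψ_right, fun x _ => ?_, fun x _ => ?_⟩
  · rw [hφ]
    exact mul_pos (by positivity) (hψ_pos x hx)
  · simp [hφ, hψ_left]
  · simp [hφ, hψ_right]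
  · rw [hφ'', hφ]
    field_simp
    ring
  · rw [hψ'', hφ]
    linear_combination (-ψs x) * hcoupling

/-- The explicit pair `(φ*, ψ*)` is a positive solution of the
Dirichlet eigenvalue system on `(-h₀, h₀)` with eigenvalue parameter `R₀ᴰ`. -/
theorem dirichlet_principal_eigenpair
    (βv βh rv dh γh Nv Nh q Dv Dh h0 : ℝ)
    (hβv : 0 < βv) (hβh : 0 < βh) (hrv : 0 < rv) (hdh : 0 < dh) (hγh : 0 < γh)
    (hNv : 0 < Nv) (hNh : 0 < Nh) (hq0 : 0 ≤ q) (hq1 : q < 1)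
    (hDv : 0 < Dv) (hDh : 0 < Dh) (hh0 : 0 < h0)
    (lamStar R0D : ℝ) (ψs φs : ℝ → ℝ)
    (hlam : lamStar = (Real.pi / (2 * h0)) ^ 2)
    (hψ : ψs = fun x => Real.cos (Real.pi * x / (2 * h0)))
    (hR0D : R0D = Real.sqrt ((βv * βh * Nv / Nh) /
        ((Dh * lamStar + dh + γh) * (Dv * lamStar + rv * (1 - q)))))
    (hφ : φs = fun x => βv * Nv / (Nh * R0D * (Dv * lamStar + rv * (1 - q))) * ψs x) :
    (∀ x ∈ Set.Ioo (-h0) h0, 0 < φs x) ∧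
    (∀ x ∈ Set.Ioo (-h0) h0, 0 < ψs x) ∧
    φs (-h0) = 0 ∧ φs h0 = 0 ∧ ψs (-h0) = 0 ∧ ψs h0 = 0 ∧
    (∀ x ∈ Set.Ioo (-h0) h0,
      -Dv * deriv (deriv φs) x = βv * Nv / (Nh * R0D) * ψs x - rv * (1 - q) * φs x) ∧
    (∀ x ∈ Set.Ioo (-h0) h0,
      -Dh * deriv (deriv ψs) x = βh / R0D * φs x - (dh + γh) * ψs x) :=
  dirichlet_principal_eigenpair_general βv βh rv dh γh Nv Nh q Dv Dh h0 hβv hβh hrv hdh hγh hNv hNh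
    hq1 hDv hDh hh0 lamStar R0D ψs φs hlam hψ hR0D hφ
end

section
/- Suppose R_0 > 1 and let (V_i*, H_i*) be the endemic equilibrium. Consider the 2×2 real Jacobian matrix of the kinetic West Nile virus system at (V_i*, H_i*): J* = [[−β_v H_i*/N_h* − r_v(1−q), β_v (N_v*−V_i*)/N_h*], [β_h (N_h*−H_i*)/N_h*, −β_h V_i*/N_h* − (d_h+γ_h)]]. Then trace(J*) < 0 and det(J*) > 0; consequently every complex root z of the characteristic polynomial z² − trace(J*) z + det(J*) has negative real part (local asymptotic stability of the endemic equilibrium). -/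
lemma quad_root_neg_re (t d : ℝ) (ht : t < 0) (hd : 0 < d) (z : ℂ)
    (hz : z ^ 2 - (t : ℂ) * z + (d : ℂ) = 0) : z.re < 0 := by
  have hre := congrArg Complex.re hz
  have him := congrArg Complex.im hz
  simp [pow_two, Complex.mul_re, Complex.mul_im] at hre him
  set x := z.re
  set y := z.im
  have him' : y * (2 * x - t) = 0 := by linarith [him]
  rcases mul_eq_zero.mp him' with hy | hxt
  · have hre' : x * x - t * x + d = 0 := by rw [hy] at hre; linarith [hre]
    by_contra h
    push_neg at h
    nlinarith
  · have : x = t / 2 := by linarith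
    rw [this]; linarith

/-- When `R₀ > 1`, the Jacobian at the endemic equilibrium has
negative trace and positive determinant, hence all characteristic roots have
negative real part (local asymptotic stability). -/
theorem endemic_jacobian_stability
    (βv βh rv dh γh Nv Nh q : ℝ)
    (hβv : 0 < βv) (hβh : 0 < βh) (hrv : 0 < rv) (hdh : 0 < dh) (hγh : 0 < γh)
    (hNv : 0 < Nv) (hNh : 0 < Nh) (hq0 : 0 ≤ q) (hq1 : q < 1)
    (hR0 : 1 < Real.sqrt (βv * βh * Nv / (rv * (1 - q) * Nh * (dh + γh))))
    (Vstar Hstar : ℝ)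
    (hVstar : Vstar = (βv * βh * Nv - rv * (1 - q) * Nh * (dh + γh)) /
        (βv * βh + rv * (1 - q) * βh))
    (hHstar : Hstar = βh * Vstar / (βh * Vstar / Nh + dh + γh))
    (Jstar : Matrix (Fin 2) (Fin 2) ℝ)
    (hJstar : Jstar = !![-(βv * Hstar / Nh) - rv * (1 - q), βv * (Nv - Vstar) / Nh;
        βh * (Nh - Hstar) / Nh, -(βh * Vstar / Nh) - (dh + γh)]) :
    Matrix.trace Jstar < 0 ∧ 0 < Matrix.det Jstar ∧
    (∀ z : ℂ,
      z ^ 2 - ((Matrix.trace Jstar : ℝ) : ℂ) * z + ((Matrix.det Jstar : ℝ) : ℂ) = 0 →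
        z.re < 0) := by
  have h1q : 0 < 1 - q := by linarith
  have hcpos : 0 < rv * (1 - q) := by positivity
  have hkpos : 0 < dh + γh := by positivity
  have hx : 0 < βv * βh * Nv / (rv * (1 - q) * Nh * (dh + γh)) := by positivity
  have hfrac : 1 < βv * βh * Nv / (rv * (1 - q) * Nh * (dh + γh)) := by
    nlinarith [Real.sq_sqrt hx.le, hR0,
      Real.sqrt_nonneg (βv * βh * Nv / (rv * (1 - q) * Nh * (dh + γh)))]
  have hnum : rv * (1 - q) * Nh * (dh + γh) < βv * βh * Nv :=
    (one_lt_div (by positivity : (0:ℝ) < rv * (1 - q) * Nh * (dh + γh))).mp hfrac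
  have hdenV : 0 < βv * βh + rv * (1 - q) * βh := by positivity
  have hV : 0 < Vstar := by
    rw [hVstar]; exact div_pos (by linarith) hdenV
  have hVNv : Vstar < Nv := by
    rw [hVstar, div_lt_iff₀ hdenV]
    nlinarith [mul_pos hNv (mul_pos hcpos hβh), mul_pos (mul_pos hcpos hNh) hkpos]
  have hdenH : 0 < βh * Vstar / Nh + dh + γh := by positivity
  have hH : 0 < Hstar := by
    rw [hHstar]; positivity
  -- equilibrium identity (multiplied by Nh)
  have e2 : Hstar * (βh * Vstar + (dh + γh) * Nh) = βh * Vstar * Nh := by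
    have h0 : Hstar * (βh * Vstar / Nh + dh + γh) = βh * Vstar := by
      rw [hHstar]; field_simp
    have h1 : Hstar * (βh * Vstar / Nh + dh + γh) * Nh = βh * Vstar * Nh := by
      rw [h0]
    field_simp at h1
    linear_combination h1
  have hHNh : Hstar < Nh := by
    have hpos : 0 < βh * Vstar + (dh + γh) * Nh := by positivity
    nlinarith [e2, mul_pos hkpos (mul_pos hNh hNh), hpos]
  have eV : Vstar * (βv * βh + rv * (1 - q) * βh) =
      βv * βh * Nv - rv * (1 - q) * Nh * (dh + γh) := by
    rw [hVstar]; field_simp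
  have e4 : βv * βh * (Nv - Vstar) = rv * (1 - q) * (βh * Vstar + (dh + γh) * Nh) := by
    linear_combination -eV
  have E1 : βh * (βv * (Nv - Vstar) * Hstar) = βh * (rv * (1 - q) * Vstar * Nh) := by
    linear_combination Hstar * e4 + rv * (1 - q) * e2
  have E1' : βv * (Nv - Vstar) * Hstar = rv * (1 - q) * Vstar * Nh :=
    mul_left_cancel₀ (ne_of_gt hβh) E1
  have E2 : βh * Vstar * (Nh - Hstar) = (dh + γh) * Hstar * Nh := by
    linear_combination -e2
  have key : βv * (Nv - Vstar) * (βh * (Nh - Hstar)) = rv * (1 - q) * (dh + γh) * Nh ^ 2 := by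
    have hcan : Hstar * Vstar * (βv * (Nv - Vstar) * (βh * (Nh - Hstar))) =
        Hstar * Vstar * (rv * (1 - q) * (dh + γh) * Nh ^ 2) := by
      linear_combination (βh * Vstar * (Nh - Hstar)) * E1' + (rv * (1 - q) * Vstar * Nh) * E2
    exact mul_left_cancel₀ (by positivity) hcan
  have htr : Matrix.trace Jstar =
      (-(βv * Hstar / Nh) - rv * (1 - q)) + (-(βh * Vstar / Nh) - (dh + γh)) := by
    rw [hJstar, Matrix.trace_fin_two_of]
  have hdet : Matrix.det Jstar =
      (-(βv * Hstar / Nh) - rv * (1 - q)) * (-(βh * Vstar / Nh) - (dh + γh)) -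
        βv * (Nv - Vstar) / Nh * (βh * (Nh - Hstar) / Nh) := by
    rw [hJstar, Matrix.det_fin_two_of]
  have hp1 : 0 < βv * Hstar / Nh := by positivity
  have hp2 : 0 < βh * Vstar / Nh := by positivity
  have htrneg : Matrix.trace Jstar < 0 := by
    rw [htr]; linarith
  have hcd : βv * (Nv - Vstar) / Nh * (βh * (Nh - Hstar) / Nh) =
      rv * (1 - q) * (dh + γh) := by
    rw [div_mul_div_comm, key]
    rw [show Nh * Nh = Nh ^ 2 by ring, mul_div_assoc]
    rw [div_self (by positivity : (Nh:ℝ) ^ 2 ≠ 0), mul_one]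
  have hdetpos : 0 < Matrix.det Jstar := by
    rw [hdet, hcd]
    have expand : (-(βv * Hstar / Nh) - rv * (1 - q)) * (-(βh * Vstar / Nh) - (dh + γh)) -
        rv * (1 - q) * (dh + γh) =
        βv * Hstar / Nh * (βh * Vstar / Nh) + βv * Hstar / Nh * (dh + γh) +
          rv * (1 - q) * (βh * Vstar / Nh) := by ring
    rw [expand]
    positivity
  exact ⟨htrneg, hdetpos, fun z hz => quad_root_neg_re _ _ htrneg hdetpos z hz⟩
end

section
/- Let h_0 > 0, λ* = (π/(2h_0))², A = D_v λ* + r_v(1−q), B = D_h λ* + d_h + γ_h, R* = (β_v β_h N_v*/N_h*)/(AB), and assume R* < 1, so that λ_0 = ((A+B) − sqrt((A+B)² + 4AB(R*−1)))/2 > 0 and δ_0 = (B − λ_0)/β_h > 0. Let ψ(y) = cos(π y/(2h_0)) and φ = δ_0 ψ. Let δ > 0 satisfy −δ + (1/(1+δ)² − 1)(β_v N_v*/(N_h* δ_0) − r_v(1−q)) + λ_0/(1+δ)² ≥ 0. For any ε > 0, define σ(t) = h_0(1 + δ − (δ/2) e^{−δ t}), V̄(x,t) = ε e^{−δ t} φ(x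 h_0/σ(t)) and H̄(x,t) = ε e^{−δ t} ψ(x h_0/σ(t)). Then for every t > 0 and every x with −σ(t) < x < σ(t), the differential inequality ∂_t V̄(x,t) − D_v ∂²_{xx} V̄(x,t) ≥ β_v (N_v* − V̄(x,t)) H̄(x,t)/N_h* − r_v(1−q) V̄(x,t) holds. -/
private lemma hlin_aux (c y : ℝ) : HasDerivAt (fun z : ℝ => c * z) c y := by
  simpa using (hasDerivAt_id y).const_mul c

private lemma bounds_aux (S x : ℝ) (hS : 0 < S) (h1 : -S < x) (h2 : x < S) :
    0 ≤ Real.cos (Real.pi / (2 * S) * x) ∧ 0 ≤ Real.sin (Real.pi / (2 * S) * x) * x := by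
  have hπ := Real.pi_pos
  have ha : 0 < Real.pi / (2 * S) := by positivity
  have hub : Real.pi / (2 * S) * x ≤ Real.pi / 2 := by
    have h3 : Real.pi / (2 * S) * x ≤ Real.pi / (2 * S) * S :=
      mul_le_mul_of_nonneg_left h2.le ha.le
    have h4 : Real.pi / (2 * S) * S = Real.pi / 2 := by field_simp
    linarith
  have hlb : -(Real.pi / 2) ≤ Real.pi / (2 * S) * x := by
    have h3 : Real.pi / (2 * S) * (-S) ≤ Real.pi / (2 * S) * x :=
      mul_le_mul_of_nonneg_left (by linarith) ha.le
    have h4 : Real.pi / (2 * S) * (-S) = -(Real.pi / 2) := by field_simp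
    linarith
  constructor
  · exact Real.cos_nonneg_of_mem_Icc ⟨hlb, hub⟩
  · rcases le_or_gt 0 x with hx0 | hx0
    · exact mul_nonneg
        (Real.sin_nonneg_of_nonneg_of_le_pi (mul_nonneg ha.le hx0) (by linarith)) hx0
    · have hs : Real.sin (Real.pi / (2 * S) * x) ≤ 0 :=
        Real.sin_nonpos_of_nonpos_of_neg_pi_le
          (le_of_lt (mul_neg_of_pos_of_neg ha hx0)) (by linarith)
      nlinarith

private lemma aux_final (βv rv q Nv Nh δ0 Dv δ ε e Sv σp h0 x K Sn : ℝ)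
    (hβv : 0 < βv) (hNh : 0 < Nh) (hδ0 : 0 < δ0) (hε : 0 < ε) (he : 0 < e)
    (hSv : 0 < Sv) (hσp : 0 < σp) (hh0 : 0 < h0)
    (hK : 0 ≤ K) (hsx : 0 ≤ Sn * x)
    (hcoef : 0 ≤ -δ + Dv * (Real.pi / (2 * Sv)) ^ 2 + rv * (1 - q) - βv * Nv / (Nh * δ0)) :
    ε * (e * (-δ)) * (δ0 * K) +
        ε * e * (δ0 * (-Sn * (Real.pi * ((0 * Sv - x * h0 * σp) / Sv ^ 2) / (2 * h0)))) -
        Dv * (ε * e * δ0 * (-(K * (Real.pi / (2 * Sv))) * (Real.pi / (2 * Sv)))) ≥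
      βv * (Nv - ε * e * δ0 * K) * (ε * e * K) / Nh - rv * (1 - q) * (ε * e * δ0 * K) := by
  have hπ := Real.pi_pos
  have hT : 0 ≤ ε * e * (δ0 * (-Sn * (Real.pi * ((0 * Sv - x * h0 * σp) / Sv ^ 2) / (2 * h0)))) := by
    have h1 : ε * e * (δ0 * (-Sn * (Real.pi * ((0 * Sv - x * h0 * σp) / Sv ^ 2) / (2 * h0)))) =
        (Sn * x) * (ε * e * δ0 * Real.pi * h0 * σp / (Sv ^ 2 * (2 * h0))) := by ring
    rw [h1]
    exact mul_nonneg hsx (by positivity)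
  have h1 : 0 ≤ (-δ + Dv * (Real.pi / (2 * Sv)) ^ 2 + rv * (1 - q) - βv * Nv / (Nh * δ0)) *
      (ε * e * δ0 * K) :=
    mul_nonneg hcoef (mul_nonneg (by positivity) hK)
  have h2 : βv * Nv / (Nh * δ0) * (ε * e * δ0 * K) = βv * Nv * (ε * e * K) / Nh := by
    field_simp
  have h3 : 0 ≤ βv * (ε * e * δ0 * K) * (ε * e * K) / Nh :=
    div_nonneg (mul_nonneg (mul_nonneg hβv.le (mul_nonneg (by positivity) hK))
      (mul_nonneg (by positivity) hK)) hNh.le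
  have h4 : βv * (Nv - ε * e * δ0 * K) * (ε * e * K) / Nh =
      βv * Nv * (ε * e * K) / Nh - βv * (ε * e * δ0 * K) * (ε * e * K) / Nh := by ring
  have h5 : (-δ + Dv * (Real.pi / (2 * Sv)) ^ 2 + rv * (1 - q) - βv * Nv / (Nh * δ0)) *
      (ε * e * δ0 * K) =
      ε * (e * (-δ)) * (δ0 * K) - Dv * (ε * e * δ0 * (-(K * (Real.pi / (2 * Sv))) *
        (Real.pi / (2 * Sv)))) + rv * (1 - q) * (ε * e * δ0 * K) -
      βv * Nv / (Nh * δ0) * (ε * e * δ0 * K) := by ring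
  linarith only [h1, h2, h3, hT, h4, h5]

set_option maxHeartbeats 1000000 in
/-- The explicit pair `(V̄, H̄)` on the expanding interval
`(-σ(t), σ(t))` satisfies the first differential inequality of an upper
solution (mosquito equation). -/
theorem upper_solution_first_inequality
    (βv βh rv dh γh Nv Nh q Dv Dh h0 : ℝ)
    (hβv : 0 < βv) (hβh : 0 < βh) (hrv : 0 < rv) (hdh : 0 < dh) (hγh : 0 < γh)
    (hNv : 0 < Nv) (hNh : 0 < Nh) (hq0 : 0 ≤ q) (hq1 : q < 1)
    (hDv : 0 < Dv) (hDh : 0 < Dh) (hh0 : 0 < h0)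
    (lamStar A B Rstar lam0 δ0 : ℝ)
    (hlam : lamStar = (Real.pi / (2 * h0)) ^ 2)
    (hA : A = Dv * lamStar + rv * (1 - q))
    (hB : B = Dh * lamStar + dh + γh)
    (hRstar : Rstar = (βv * βh * Nv / Nh) / (A * B))
    (hRlt1 : Rstar < 1)
    (hlam0 : lam0 = ((A + B) - Real.sqrt ((A + B) ^ 2 + 4 * A * B * (Rstar - 1))) / 2)
    (hlam0pos : 0 < lam0)
    (hδ0 : δ0 = (B - lam0) / βh) (hδ0pos : 0 < δ0)
    (ψ φ : ℝ → ℝ)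
    (hψ : ψ = fun y => Real.cos (Real.pi * y / (2 * h0)))
    (hφ : φ = fun y => δ0 * ψ y)
    (δ : ℝ) (hδpos : 0 < δ)
    (hδineq : -δ + (1 / (1 + δ) ^ 2 - 1) * (βv * Nv / (Nh * δ0) - rv * (1 - q)) +
        lam0 / (1 + δ) ^ 2 ≥ 0)
    (ε : ℝ) (hε : 0 < ε)
    (σ : ℝ → ℝ) (hσ : σ = fun t => h0 * (1 + δ - δ / 2 * Real.exp (-δ * t)))
    (Vb Hb : ℝ → ℝ → ℝ)
    (hVb : Vb = fun x t => ε * Real.exp (-δ * t) * φ (x * h0 / σ t))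
    (hHb : Hb = fun x t => ε * Real.exp (-δ * t) * ψ (x * h0 / σ t)) :
    ∀ t : ℝ, 0 < t → ∀ x : ℝ, -σ t < x → x < σ t →
      deriv (fun s => Vb x s) t - Dv * deriv (deriv (fun y => Vb y t)) x ≥
        βv * (Nv - Vb x t) * Hb x t / Nh - rv * (1 - q) * Vb x t := by
  have hπ := Real.pi_pos
  have hh0' : h0 ≠ 0 := hh0.ne'
  have hNh' : Nh ≠ 0 := hNh.ne'
  have hδ0' : δ0 ≠ 0 := hδ0pos.ne'
  have hq' : 0 < 1 - q := by linarith
  have hlamstar : 0 < lamStar := by rw [hlam]; positivity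
  have hApos : 0 < A := by
    rw [hA]; linarith only [mul_pos hDv hlamstar, mul_pos hrv hq']
  have hBpos : 0 < B := by
    rw [hB]; linarith only [mul_pos hDh hlamstar, hdh, hγh]
  have hRpos : 0 < Rstar := by
    rw [hRstar]; exact div_pos (by positivity) (mul_pos hApos hBpos)
  -- key algebraic identity : A - lam0 = βv Nv / (Nh δ0)
  have hargnn : 0 ≤ (A + B) ^ 2 + 4 * A * B * (Rstar - 1) := by
    linarith only [sq_nonneg (A - B), mul_pos (mul_pos hApos hBpos) hRpos]
  have hs2 : Real.sqrt ((A + B) ^ 2 + 4 * A * B * (Rstar - 1)) ^ 2 =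
      (A + B) ^ 2 + 4 * A * B * (Rstar - 1) := Real.sq_sqrt hargnn
  have hs : Real.sqrt ((A + B) ^ 2 + 4 * A * B * (Rstar - 1)) = A + B - 2 * lam0 := by
    linarith only [hlam0]
  rw [hs] at hs2
  have hquad : lam0 ^ 2 - (A + B) * lam0 + A * B * (1 - Rstar) = 0 := by
    linear_combination hs2 / 4
  have hBlam : B - lam0 = βh * δ0 := by rw [hδ0]; field_simp
  have hABR : A * B * Rstar = βv * βh * Nv / Nh := by
    rw [hRstar]; field_simp
  have hprod : (A - lam0) * (B - lam0) = βv * βh * Nv / Nh := by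
    linear_combination hquad + hABR
  rw [hBlam] at hprod
  have hkey : A - lam0 = βv * Nv / (Nh * δ0) := by
    have hne : βh * δ0 ≠ 0 := (mul_pos hβh hδ0pos).ne'
    have h3 : βv * Nv / (Nh * δ0) * (βh * δ0) = βv * βh * Nv / Nh := by
      rw [div_mul_eq_mul_div, div_eq_div_iff (mul_ne_zero hNh' hδ0') hNh']; ring
    have h2 : (A - lam0) * (βh * δ0) = βv * Nv / (Nh * δ0) * (βh * δ0) := by
      rw [hprod, h3]
    exact mul_right_cancel₀ hne h2
  have hACalt : βv * Nv / (Nh * δ0) = Dv * lamStar + rv * (1 - q) - lam0 := by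
    rw [← hkey, hA]
  -- coefficient inequality independent of t (after bounding a² below)
  have hδineq' := hδineq
  rw [hACalt] at hδineq'
  have hcoefA : 0 ≤ -δ + Dv * lamStar / (1 + δ) ^ 2 - Dv * lamStar + lam0 := by
    have heq3 : -δ + (1 / (1 + δ) ^ 2 - 1) *
        (Dv * lamStar + rv * (1 - q) - lam0 - rv * (1 - q)) + lam0 / (1 + δ) ^ 2 =
        -δ + Dv * lamStar / (1 + δ) ^ 2 - Dv * lamStar + lam0 := by ring
    linarith only [hδineq', heq3]
  intro t ht x hx1 hx2
  have hexppos : 0 < Real.exp (-δ * t) := Real.exp_pos _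
  have hexplt : Real.exp (-δ * t) < 1 :=
    Real.exp_lt_one_iff.mpr (by linarith only [mul_pos hδpos ht])
  have hS0 : 0 < σ t := by
    simp only [hσ]
    have hb : δ / 2 * Real.exp (-δ * t) < δ / 2 * 1 :=
      mul_lt_mul_of_pos_left hexplt (half_pos hδpos)
    exact mul_pos hh0 (by linarith only [hb, hδpos])
  have hSle : σ t ≤ h0 * (1 + δ) := by
    simp only [hσ]
    have hb : (0:ℝ) ≤ δ / 2 * Real.exp (-δ * t) :=
      le_of_lt (mul_pos (half_pos hδpos) hexppos)
    exact mul_le_mul_of_nonneg_left (by linarith only [hb]) hh0.le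
  have harg : ∀ y : ℝ, Real.pi * (y * h0 / σ t) / (2 * h0) = Real.pi / (2 * σ t) * y := by
    intro y; field_simp [hS0.ne']
  -- lower bound on a²
  have ha_lb : Real.pi / (2 * (h0 * (1 + δ))) ≤ Real.pi / (2 * σ t) := by
    apply div_le_div_of_nonneg_left hπ.le (by positivity)
    linarith only [hSle]
  have ha2 : Dv * lamStar / (1 + δ) ^ 2 ≤ Dv * (Real.pi / (2 * σ t)) ^ 2 := by
    have hb : (0:ℝ) ≤ Real.pi / (2 * (h0 * (1 + δ))) := by positivity
    have hsq : (Real.pi / (2 * (h0 * (1 + δ)))) ^ 2 ≤ (Real.pi / (2 * σ t)) ^ 2 :=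
      pow_le_pow_left₀ hb ha_lb 2
    have heq2 : Dv * lamStar / (1 + δ) ^ 2 = Dv * (Real.pi / (2 * (h0 * (1 + δ)))) ^ 2 := by
      rw [hlam]; field_simp
    rw [heq2]
    exact mul_le_mul_of_nonneg_left hsq hDv.le
  have hcoef : 0 ≤ -δ + Dv * (Real.pi / (2 * σ t)) ^ 2 + rv * (1 - q) - βv * Nv / (Nh * δ0) := by
    rw [hACalt]; linarith only [hcoefA, ha2]
  -- derivative computations
  set σp : ℝ := h0 * (0 - δ / 2 * (Real.exp (-δ * t) * (-δ))) with hσp_def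
  have hσppos : 0 < σp := by
    rw [hσp_def]
    linarith only [mul_pos (mul_pos (mul_pos hh0 (half_pos hδpos)) hδpos) hexppos]
  have hσd : HasDerivAt σ σp t := by
    rw [hσp_def, hσ]
    exact ((hasDerivAt_const t (1 + δ)).sub
      (((hlin_aux (-δ) t).exp).const_mul (δ / 2))).const_mul h0
  have hcos_t : HasDerivAt (fun s => Real.cos (Real.pi * (x * h0 / σ s) / (2 * h0)))
      (-Real.sin (Real.pi * (x * h0 / σ t) / (2 * h0)) *
        (Real.pi * ((0 * σ t - x * h0 * σp) / σ t ^ 2) / (2 * h0))) t :=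
    ((((hasDerivAt_const t (x * h0)).div hσd hS0.ne').const_mul Real.pi).div_const (2 * h0)).cos
  have htd0 : deriv (fun s => Vb x s) t =
      ε * (Real.exp (-δ * t) * (-δ)) * (δ0 * Real.cos (Real.pi / (2 * σ t) * x)) +
      ε * Real.exp (-δ * t) * (δ0 * (-Real.sin (Real.pi / (2 * σ t) * x) *
        (Real.pi * ((0 * σ t - x * h0 * σp) / σ t ^ 2) / (2 * h0)))) := by
    have hfun2 : (fun s => Vb x s) =
        (fun s => ε * Real.exp (-δ * s) *
          (δ0 * Real.cos (Real.pi * (x * h0 / σ s) / (2 * h0)))) := by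
      funext s; simp only [hVb, hφ, hψ]
    rw [hfun2, ← harg x]
    exact ((((hlin_aux (-δ) t).exp).const_mul ε).mul (hcos_t.const_mul δ0)).deriv
  have hfun : (fun y => Vb y t) =
      (fun y => ε * Real.exp (-δ * t) * δ0 * Real.cos (Real.pi / (2 * σ t) * y)) := by
    funext y; simp only [hVb, hφ, hψ]; rw [harg y]; ring
  have hd1 : deriv (fun y => Vb y t) =
      fun y => ε * Real.exp (-δ * t) * δ0 *
        (-Real.sin (Real.pi / (2 * σ t) * y) * (Real.pi / (2 * σ t))) := by
    rw [hfun]; funext y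
    exact (((hlin_aux (Real.pi / (2 * σ t)) y).cos).const_mul
      (ε * Real.exp (-δ * t) * δ0)).deriv
  have hd2 : deriv (deriv (fun y => Vb y t)) x =
      ε * Real.exp (-δ * t) * δ0 *
        (-(Real.cos (Real.pi / (2 * σ t) * x) * (Real.pi / (2 * σ t))) * (Real.pi / (2 * σ t))) := by
    rw [hd1]
    exact ((((hlin_aux (Real.pi / (2 * σ t)) x).sin).neg.mul_const
      (Real.pi / (2 * σ t))).const_mul (ε * Real.exp (-δ * t) * δ0)).deriv
  have hVxt : Vb x t = ε * Real.exp (-δ * t) * δ0 * Real.cos (Real.pi / (2 * σ t) * x) := by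
    simp only [hVb, hφ, hψ]; rw [harg x]; ring
  have hHxt : Hb x t = ε * Real.exp (-δ * t) * Real.cos (Real.pi / (2 * σ t) * x) := by
    simp only [hHb, hψ]; rw [harg x]
  obtain ⟨hK0, hsx⟩ := bounds_aux (σ t) x hS0 hx1 hx2
  rw [htd0, hd2, hVxt, hHxt]
  exact aux_final βv rv q Nv Nh δ0 Dv δ ε (Real.exp (-δ * t)) (σ t) σp h0 x
    (Real.cos (Real.pi / (2 * σ t) * x)) (Real.sin (Real.pi / (2 * σ t) * x))
    hβv hNh hδ0pos hε hexppos hS0 hσppos hh0 hK0 hsx hcoef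
end

section
/- Let h_0 > 0, λ* = (π/(2h_0))², A = D_v λ* + r_v(1−q), B = D_h λ* + d_h + γ_h, R* = (β_v β_h N_v*/N_h*)/(AB), and assume R* < 1, so that λ_0 = ((A+B) − sqrt((A+B)² + 4AB(R*−1)))/2 > 0 and δ_0 = (B − λ_0)/β_h > 0. Let ψ(y) = cos(π y/(2h_0)) and φ = δ_0 ψ. Let δ > 0 satisfy −δ + (1/(1+δ)² − 1)(β_h δ_0 − (d_h+γ_h)) + λ_0/(1+δ)² ≥ 0. For any ε > 0, define σ(t) = h_0(1 + δ − (δ/2) e^{−δ t}), V̄(x,t) = ε e^{−δ t} φ(x h_0/σ(t)) and H̄(x,t) = ε e^{−δ t} ψ(x h_0/σ(t)). Then for every t > 0 and every x with −σ(t) < x < σ(t), the differential inequality ∂_t H̄(x,t) − D_h ∂²_{xx} H̄(x,t) ≥ β_h V̄(x,t) (N_h* − H̄(x,t))/N_h* − (d_h+γ_h) H̄(x,t) holds. -/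
set_option maxHeartbeats 2000000


/-- The explicit pair `(V̄, H̄)` on the expanding interval
`(-σ(t), σ(t))` satisfies the second differential inequality of an upper
solution (bird equation). -/
theorem upper_solution_second_inequality
    (βv βh rv dh γh Nv Nh q Dv Dh h0 : ℝ)
    (hβv : 0 < βv) (hβh : 0 < βh) (hrv : 0 < rv) (hdh : 0 < dh) (hγh : 0 < γh)
    (hNv : 0 < Nv) (hNh : 0 < Nh) (hq0 : 0 ≤ q) (hq1 : q < 1)
    (hDv : 0 < Dv) (hDh : 0 < Dh) (hh0 : 0 < h0)
    (lamStar A B Rstar lam0 δ0 : ℝ)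
    (hlam : lamStar = (Real.pi / (2 * h0)) ^ 2)
    (hA : A = Dv * lamStar + rv * (1 - q))
    (hB : B = Dh * lamStar + dh + γh)
    (hRstar : Rstar = (βv * βh * Nv / Nh) / (A * B))
    (hRlt1 : Rstar < 1)
    (hlam0 : lam0 = ((A + B) - Real.sqrt ((A + B) ^ 2 + 4 * A * B * (Rstar - 1))) / 2)
    (hlam0pos : 0 < lam0)
    (hδ0 : δ0 = (B - lam0) / βh) (hδ0pos : 0 < δ0)
    (ψ φ : ℝ → ℝ)
    (hψ : ψ = fun y => Real.cos (Real.pi * y / (2 * h0)))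
    (hφ : φ = fun y => δ0 * ψ y)
    (δ : ℝ) (hδpos : 0 < δ)
    (hδineq : -δ + (1 / (1 + δ) ^ 2 - 1) * (βh * δ0 - (dh + γh)) +
        lam0 / (1 + δ) ^ 2 ≥ 0)
    (ε : ℝ) (hε : 0 < ε)
    (σ : ℝ → ℝ) (hσ : σ = fun t => h0 * (1 + δ - δ / 2 * Real.exp (-δ * t)))
    (Vb Hb : ℝ → ℝ → ℝ)
    (hVb : Vb = fun x t => ε * Real.exp (-δ * t) * φ (x * h0 / σ t))
    (hHb : Hb = fun x t => ε * Real.exp (-δ * t) * ψ (x * h0 / σ t)) :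
    ∀ t : ℝ, 0 < t → ∀ x : ℝ, -σ t < x → x < σ t →
      deriv (fun s => Hb x s) t - Dh * deriv (deriv (fun y => Hb y t)) x ≥
        βh * Vb x t * (Nh - Hb x t) / Nh - (dh + γh) * Hb x t := by
  intro t ht x hx1 hx2
  clear hlam0 hRstar hRlt1 hA hβv hrv hNv hDv hq0 hq1
  have hπ := Real.pi_pos
  have hδ1 : (0:ℝ) < 1 + δ := by linarith
  simp only [hσ] at hx1 hx2
  have harg : ∀ z y : ℝ, Real.pi * (z * h0 / y) / (2 * h0) = Real.pi * z / (2 * y) := by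
    intro z y
    rcases eq_or_ne y 0 with h | h
    · simp [h]
    · have hh0' : h0 ≠ 0 := ne_of_gt hh0
      field_simp
  simp only [hVb, hHb, hψ, hφ, hσ, harg]
  set E := Real.exp (-δ * t) with hE
  have hE0 : 0 < E := Real.exp_pos _
  have hE1 : E < 1 := by
    rw [hE, Real.exp_lt_one_iff]
    have := mul_pos hδpos ht
    linarith
  set St := h0 * (1 + δ - δ / 2 * E) with hStdef
  have hhalf : δ / 2 * E < δ / 2 * 1 := mul_lt_mul_of_pos_left hE1 (by linarith)
  have hhalf0 : 0 < δ / 2 * E := mul_pos (by linarith) hE0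
  have hSt0 : 0 < St := by rw [hStdef]; exact mul_pos hh0 (by linarith)
  have hStub : St ≤ h0 * (1 + δ) := by
    rw [hStdef]
    apply mul_le_mul_of_nonneg_left _ (le_of_lt hh0)
    linarith
  have hStne : St ≠ 0 := ne_of_gt hSt0
  -- angle bounds
  have hθub : Real.pi * x / (2 * St) < Real.pi / 2 := by
    rw [div_lt_iff₀ (by positivity)]
    have := mul_lt_mul_of_pos_left hx2 hπ
    linarith
  have hθlb : -(Real.pi / 2) < Real.pi * x / (2 * St) := by
    rw [lt_div_iff₀ (by positivity)]
    have := mul_lt_mul_of_pos_left hx1 hπ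
    linarith
  set C := Real.cos (Real.pi * x / (2 * St)) with hCdef
  set Sn := Real.sin (Real.pi * x / (2 * St)) with hSndef
  have hC : 0 < C := Real.cos_pos_of_mem_Ioo ⟨hθlb, hθub⟩
  have hxSn : 0 ≤ x * Sn := by
    rcases le_or_gt 0 x with hx | hx
    · apply mul_nonneg hx
      rw [hSndef]
      apply Real.sin_nonneg_of_nonneg_of_le_pi
      · positivity
      · linarith
    · have h1 : Sn ≤ 0 := by
        rw [hSndef]
        apply Real.sin_nonpos_of_nonpos_of_neg_pi_le
        · apply div_nonpos_of_nonpos_of_nonneg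
          · exact mul_nonpos_of_nonneg_of_nonpos (le_of_lt hπ) (le_of_lt hx)
          · positivity
        · linarith
      nlinarith [mul_nonneg (neg_nonneg.2 (le_of_lt hx)) (neg_nonneg.2 h1)]
  -- time derivative
  have hlin : HasDerivAt (fun s : ℝ => -δ * s) (-δ) t := by
    simpa using (hasDerivAt_id t).const_mul (-δ)
  have hexp : HasDerivAt (fun s : ℝ => Real.exp (-δ * s)) (E * -δ) t := hlin.exp
  have hden : HasDerivAt (fun s : ℝ => 2 * (h0 * (1 + δ - δ / 2 * Real.exp (-δ * s))))
      (2 * (h0 * (0 - δ / 2 * (E * -δ)))) t :=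
    (((hasDerivAt_const t (1 + δ)).sub (hexp.const_mul (δ / 2))).const_mul h0).const_mul 2
  have hu : HasDerivAt (fun s : ℝ => Real.pi * x / (2 * (h0 * (1 + δ - δ / 2 * Real.exp (-δ * s)))))
      ((0 * (2 * St) - Real.pi * x * (2 * (h0 * (0 - δ / 2 * (E * -δ))))) / (2 * St) ^ 2) t :=
    (hasDerivAt_const t (Real.pi * x)).div hden (by positivity)
  have htime : HasDerivAt
      (fun s : ℝ => ε * Real.exp (-δ * s) *
        Real.cos (Real.pi * x / (2 * (h0 * (1 + δ - δ / 2 * Real.exp (-δ * s))))))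
      (ε * (E * -δ) * C +
        ε * E * (-Sn * ((0 * (2 * St) - Real.pi * x * (2 * (h0 * (0 - δ / 2 * (E * -δ))))) / (2 * St) ^ 2))) t :=
    (hexp.const_mul ε).mul hu.cos
  have hd1 : deriv (fun s : ℝ => ε * Real.exp (-δ * s) *
        Real.cos (Real.pi * x / (2 * (h0 * (1 + δ - δ / 2 * Real.exp (-δ * s)))))) t =
      ε * (E * -δ) * C +
        ε * E * (-Sn * ((0 * (2 * St) - Real.pi * x * (2 * (h0 * (0 - δ / 2 * (E * -δ))))) / (2 * St) ^ 2)) :=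
    htime.deriv
  -- spatial derivatives
  have hsp1 : deriv (fun y : ℝ => ε * E * Real.cos (Real.pi * y / (2 * St))) =
      fun y : ℝ => ε * E * (-Real.sin (Real.pi * y / (2 * St)) * (Real.pi * 1 / (2 * St))) := by
    funext y
    exact (((((hasDerivAt_id y).const_mul Real.pi).div_const (2 * St)).cos).const_mul (ε * E)).deriv
  have hsp2 : deriv (fun y : ℝ => ε * E * (-Real.sin (Real.pi * y / (2 * St)) * (Real.pi * 1 / (2 * St)))) x =
      ε * E * (-(C * (Real.pi * 1 / (2 * St))) * (Real.pi * 1 / (2 * St))) :=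
    (((((hasDerivAt_id x).const_mul Real.pi).div_const (2 * St)).sin.neg).mul_const
      (Real.pi * 1 / (2 * St))).const_mul (ε * E) |>.deriv
  rw [hd1, hsp1, hsp2]
  -- main inequality
  have hM : 0 ≤ ε * E * C := by positivity
  have hβδ : βh * δ0 = B - lam0 := by
    rw [hδ0]
    field_simp
  have hPpos : (0:ℝ) < (1 + δ) ^ 2 := by positivity
  have hfrac : Real.pi ^ 2 / (4 * (h0 * (1 + δ)) ^ 2) ≤ Real.pi ^ 2 / (4 * St ^ 2) := by
    apply div_le_div_of_nonneg_left (by positivity) (by positivity)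
    nlinarith [hSt0, hStub]
  have hlamval : lamStar = Real.pi ^ 2 / (4 * h0 ^ 2) := by
    rw [hlam]; field_simp; ring
  have hcoef : βh * δ0 - (dh + γh) ≤ -δ + Dh * (Real.pi ^ 2 / (4 * St ^ 2)) := by
    have e1 : -δ + (1 / (1 + δ) ^ 2 - 1) * (βh * δ0 - (dh + γh)) + lam0 / (1 + δ) ^ 2 =
        -δ + (Dh * lamStar / (1 + δ) ^ 2 - Dh * lamStar + lam0) := by
      rw [hβδ, hB]
      field_simp
      ring
    have e2 : Dh * lamStar / (1 + δ) ^ 2 = Dh * (Real.pi ^ 2 / (4 * (h0 * (1 + δ)) ^ 2)) := by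
      rw [hlamval]
      field_simp
    have e3 : Dh * (Real.pi ^ 2 / (4 * (h0 * (1 + δ)) ^ 2)) ≤ Dh * (Real.pi ^ 2 / (4 * St ^ 2)) :=
      mul_le_mul_of_nonneg_left hfrac (le_of_lt hDh)
    have h4 : βh * δ0 - (dh + γh) = Dh * lamStar - lam0 := by
      rw [hβδ, hB]; ring
    rw [h4]
    rw [e1] at hδineq
    rw [e2] at hδineq
    linarith [e3]
  have hdiv1 : (Nh - ε * E * C) / Nh ≤ 1 := by
    rw [div_le_one hNh]
    linarith [hM]
  have step1 : βh * (ε * E * (δ0 * C)) * (Nh - ε * E * C) / Nh ≤ βh * δ0 * (ε * E * C) := by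
    have h5 : βh * (ε * E * (δ0 * C)) * (Nh - ε * E * C) / Nh =
        (βh * δ0 * (ε * E * C)) * ((Nh - ε * E * C) / Nh) := by ring
    rw [h5]
    have h6 : 0 ≤ βh * δ0 * (ε * E * C) := by positivity
    calc (βh * δ0 * (ε * E * C)) * ((Nh - ε * E * C) / Nh) ≤ (βh * δ0 * (ε * E * C)) * 1 :=
          mul_le_mul_of_nonneg_left hdiv1 h6
      _ = βh * δ0 * (ε * E * C) := mul_one _
  have step2 : (ε * E * C) * (βh * δ0 - (dh + γh)) ≤ (ε * E * C) * (-δ + Dh * (Real.pi ^ 2 / (4 * St ^ 2))) :=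
    mul_le_mul_of_nonneg_left hcoef hM
  have hextra : 0 ≤ ε * E * Real.pi * h0 * δ ^ 2 * E / (4 * St ^ 2) * (x * Sn) := by
    have : (0:ℝ) ≤ ε * E * Real.pi * h0 * δ ^ 2 * E / (4 * St ^ 2) := by positivity
    exact mul_nonneg this hxSn
  have lhs_eq : ε * (E * -δ) * C +
        ε * E * (-Sn * ((0 * (2 * St) - Real.pi * x * (2 * (h0 * (0 - δ / 2 * (E * -δ))))) / (2 * St) ^ 2)) -
        Dh * (ε * E * (-(C * (Real.pi * 1 / (2 * St))) * (Real.pi * 1 / (2 * St)))) =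
      (ε * E * C) * (-δ + Dh * (Real.pi ^ 2 / (4 * St ^ 2))) +
        ε * E * Real.pi * h0 * δ ^ 2 * E / (4 * St ^ 2) * (x * Sn) := by
    field_simp
    ring
  rw [ge_iff_le, lhs_eq]
  linarith [step1, step2, hextra]
end

section
/- Let h_0 > 0, δ > 0, μ > 0, D_h > 0, ψ(y) = cos(π y/(2h_0)), σ(t) = h_0(1 + δ − (δ/2) e^{−δ t}), and for ε > 0 let H̄(x,t) = ε e^{−δ t} ψ(x h_0/σ(t)). Then there exists ε_0 > 0 (for instance ε_0 = h_0² δ²/(μ D_h π)) such that for every ε with 0 < ε ≤ ε_0 and every t ≥ 0 one has σ'(t) ≥ −μ D_h ∂_x H̄(σ(t), t) and −σ'(t) ≤ −μ D_h ∂_x H̄(−σ(t), t); that is, the explicit upper solution satisfies the free-boundary (Stefan-type) inequalities at x = ±σ(t). -/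
/-!
At time `t` the profile `x ↦ H̄(x, t)` is `ε e^{-δt} cos (π x / (2σ))`, a quarter period of a cosine
on `[0, σ]`, so its slope at `±σ` is `∓ ε e^{-δt} π / (2σ)`. As `σ' = (h₀ δ² / 2) e^{-δt}`, both inequalities reduce to
`μ D_h ε π / (2σ) ≤ h₀ δ² / 2`, which holds for `ε ≤ h₀² δ² / (μ D_h π)` because `σ ≥ h₀`.
-/

open Real

lemma hasDerivAt_expanding_radius (h0 δ t : ℝ) :
    HasDerivAt (fun t => h0 * (1 + δ - δ / 2 * exp (-δ * t)))
      (h0 * δ ^ 2 / 2 * exp (-δ * t)) t := by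
  have hexp : HasDerivAt (fun t => exp (-δ * t)) (exp (-δ * t) * -δ) t := by
    simpa using ((hasDerivAt_id t).const_mul (-δ)).exp
  exact (((hexp.const_mul (δ / 2)).const_sub (1 + δ)).const_mul h0).congr_deriv (by ring)

lemma le_expanding_radius {h0 δ t : ℝ} (hh0 : 0 ≤ h0) (hδ : 0 ≤ δ) (ht : 0 ≤ t) :
    h0 ≤ h0 * (1 + δ - δ / 2 * exp (-δ * t)) := by
  have hexp : exp (-δ * t) ≤ 1 := exp_le_one_iff.mpr (by nlinarith)
  nlinarith [mul_nonneg hh0 hδ]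

lemma hasDerivAt_const_mul_cos_mul (A k x : ℝ) :
    HasDerivAt (fun x => A * cos (k * x)) (-(A * k * sin (k * x))) x :=
  ((((hasDerivAt_id x).const_mul k).cos).const_mul A).congr_deriv
    (by simp only [id, mul_one]; ring)

section QuarterPeriod

variable {s : ℝ} (A : ℝ) (hs : s ≠ 0)
include hs

lemma deriv_const_mul_cos_quarter_period_right :
    deriv (fun x => A * cos (π / (2 * s) * x)) s = -(A * (π / (2 * s))) := by
  have hquarter : π / (2 * s) * s = π / 2 := by field_simp
  rw [(hasDerivAt_const_mul_cos_mul A _ s).deriv, hquarter, sin_pi_div_two, mul_one]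

lemma deriv_const_mul_cos_quarter_period_left :
    deriv (fun x => A * cos (π / (2 * s) * x)) (-s) = A * (π / (2 * s)) := by
  have hquarter : π / (2 * s) * -s = -(π / 2) := by field_simp
  rw [(hasDerivAt_const_mul_cos_mul A _ (-s)).deriv, hquarter, sin_neg, sin_pi_div_two]
  ring

end QuarterPeriod

lemma front_speed_le {c ε h0 δ s : ℝ} (hc : 0 < c) (hh0 : 0 < h0) (hs : h0 ≤ s)
    (hε : ε ≤ h0 ^ 2 * δ ^ 2 / (c * π)) :
    c * ε * (π / (2 * s)) ≤ h0 * δ ^ 2 / 2 := by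
  have hcε : c * ε * π ≤ h0 ^ 2 * δ ^ 2 := by
    rwa [le_div_iff₀ (by positivity), ← mul_assoc, mul_comm ε c] at hε
  have hspos : 0 < s := hh0.trans_le hs
  rw [← mul_div_assoc, div_le_div_iff₀ (by positivity) two_pos]
  nlinarith [mul_le_mul_of_nonneg_left hs (by positivity : (0 : ℝ) ≤ h0 * δ ^ 2)]

/-- For small enough `ε`, the explicit upper solution satisfies
the free-boundary (Stefan-type) inequalities at `x = ±σ(t)`. -/
theorem upper_solution_free_boundary_inequalities
    (h0 δ μ Dh : ℝ) (hh0 : 0 < h0) (hδ : 0 < δ) (hμ : 0 < μ) (hDh : 0 < Dh)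
    (ψ : ℝ → ℝ) (hψ : ψ = fun y => Real.cos (Real.pi * y / (2 * h0)))
    (σ : ℝ → ℝ) (hσ : σ = fun t => h0 * (1 + δ - δ / 2 * Real.exp (-δ * t)))
    (Hb : ℝ → ℝ → ℝ → ℝ)
    (hHb : Hb = fun ε x t => ε * Real.exp (-δ * t) * ψ (x * h0 / σ t)) :
    ∃ ε0 : ℝ, 0 < ε0 ∧
      ∀ ε : ℝ, 0 < ε → ε ≤ ε0 → ∀ t : ℝ, 0 ≤ t →
        deriv σ t ≥ -(μ * Dh) * deriv (fun x => Hb ε x t) (σ t) ∧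
        -(deriv σ t) ≤ -(μ * Dh) * deriv (fun x => Hb ε x t) (-(σ t)) := by
  subst hσ hHb hψ
  refine ⟨h0 ^ 2 * δ ^ 2 / (μ * Dh * π), by positivity, fun ε _ hε t ht => ?_⟩
  set s := h0 * (1 + δ - δ / 2 * exp (-δ * t))
  have hs_ge : h0 ≤ s := le_expanding_radius hh0.le hδ.le ht
  have hs_ne : s ≠ 0 := (hh0.trans_le hs_ge).ne'
  have hprofile : (fun x => ε * exp (-δ * t) * cos (π * (x * h0 / s) / (2 * h0))) =
      fun x => ε * exp (-δ * t) * cos (π / (2 * s) * x) := by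
    funext x
    congr 2
    field_simp
  rw [(hasDerivAt_expanding_radius h0 δ t).deriv, hprofile,
    deriv_const_mul_cos_quarter_period_right _ hs_ne,
    deriv_const_mul_cos_quarter_period_left _ hs_ne]
  have hspeed := mul_le_mul_of_nonneg_right
    (front_speed_le (mul_pos hμ hDh) hh0 hs_ge hε) (exp_pos (-δ * t)).le
  constructor <;> linarith
end

section
/- Let h_0 > 0, λ* = (π/(2h_0))², A = D_v λ* + r_v(1−q), B = D_h λ* + d_h + γ_h, R* = (β_v β_h N_v*/N_h*)/(AB), and assume R* > 1, so that λ_0 = ((A+B) − sqrt((A+B)² + 4AB(R*−1)))/2 < 0 and δ_0 = (B − λ_0)/β_h > 0. Let ψ(x) = cos(π x/(2h_0)) and φ = δ_0 ψ. Then there exists δ_1 > 0 (for instance δ_1 = min(−λ_0 N_h*/β_v, −λ_0 N_h*/(β_h δ_0))) such that for every δ with 0 < δ ≤ δ_1 and every x ∈ (−h_0, h_0), the stationary pair (V̲, H̲) = (δ φ(x), δ ψ(x)) satisfies −D_v (δφ)''(x) ≤ β_v (N_v* − δφ(x)) δψ(x)/N_h* − r_v(1−q) δφ(x) and −D_h (δψ)''(x)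 ≤ β_h δφ(x) (N_h* − δψ(x))/N_h* − (d_h+γ_h) δψ(x); that is, (δφ, δψ) is a lower solution of the West Nile virus system on (−h_0, h_0). -/
/-!
With `ψ = cos (π x / (2 h₀))` one has `-ψ'' = λ* ψ`, so on the pair `(δ₀ ψ, ψ)` the linearised
system acts as the reaction matrix `[[-A, βᵥ Nᵥ/N_h], [β_h, -B]]`. Since `λ₀` is the smaller
root of `(A - λ)(B - λ) = A B R*`, the vector `(δ₀, 1)` is an eigenvector of it with eigenvalue
`-λ₀ > 0`. This surplus `-λ₀ δ ψ` dominates the quadratic losses `βᵥ δφ δψ / N_h` and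
`β_h δφ δψ / N_h` as soon as `δ ψ ≤ δ ≤ -λ₀ N_h / β` for the relevant `β`.
-/

open Real

theorem deriv_deriv_const_mul_cos (c k x : ℝ) :
    deriv (deriv fun y => c * cos (k * y)) x = -(c * k ^ 2) * cos (k * x) := by
  have h1 (y : ℝ) : HasDerivAt (fun y => c * cos (k * y)) (-(c * k) * sin (k * y)) y :=
    (((hasDerivAt_id' y).const_mul k).cos.const_mul c).congr_deriv (by ring)
  have h2 : HasDerivAt (fun y => -(c * k) * sin (k * y)) (-(c * k ^ 2) * cos (k * x)) x :=
    (((hasDerivAt_id' x).const_mul k).sin.const_mul (-(c * k))).congr_deriv (by ring)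
  rw [funext fun y => (h1 y).deriv, h2.deriv]

theorem cos_pi_mul_div_pos {h x : ℝ} (hx : x ∈ Set.Ioo (-h) h) :
    0 < cos (π * x / (2 * h)) := by
  obtain ⟨hlo, hhi⟩ := hx
  have h0 : 0 < 2 * h := by linarith
  apply cos_pos_of_mem_Ioo
  constructor
  · rw [lt_div_iff₀ h0]; nlinarith [pi_pos]
  · rw [div_lt_iff₀ h0]; nlinarith [pi_pos]

theorem sub_mul_sub_eq_of_eq_quadratic_root {A B R lam : ℝ}
    (hD : 0 ≤ (A + B) ^ 2 + 4 * A * B * (R - 1))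
    (hlam : lam = ((A + B) - √((A + B) ^ 2 + 4 * A * B * (R - 1))) / 2) :
    (A - lam) * (B - lam) = A * B * R := by
  have hsqrt : √((A + B) ^ 2 + 4 * A * B * (R - 1)) = A + B - 2 * lam := by
    rw [hlam]; ring
  have hsq := sq_sqrt hD
  rw [hsqrt] at hsq
  linear_combination hsq / 4

theorem mul_le_sub_mul_sub_mul_div {a lam β N u v : ℝ} (hN : 0 < N) (hu : 0 ≤ u)
    (hv : β * v ≤ -lam * N) :
    a * u ≤ (a - lam) * u - β * v * u / N := by
  have : β * v * u / N ≤ -lam * u := by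
    rw [div_le_iff₀ hN]; nlinarith
  linarith

theorem eigenvector_of_smaller_root {A B R lam δ0 βv βh Nv Nh : ℝ} (hA : 0 < A) (hB : 0 < B)
    (hβh : 0 < βh) (hR1 : 1 < R) (hR : R = (βv * βh * Nv / Nh) / (A * B))
    (hlam : lam = ((A + B) - √((A + B) ^ 2 + 4 * A * B * (R - 1))) / 2)
    (hδ0 : δ0 = (B - lam) / βh) :
    βv * Nv / Nh = (A - lam) * δ0 ∧ βh * δ0 = B - lam := by
  have heig : (A - lam) * (B - lam) = A * B * R :=
    sub_mul_sub_eq_of_eq_quadratic_root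
      (add_nonneg (sq_nonneg _) (mul_nonneg (by positivity) (sub_nonneg.2 hR1.le))) hlam
  have hABR : A * B * R = βv * βh * Nv / Nh := by rw [hR]; field_simp
  have hβhδ0 : βh * δ0 = B - lam := by rw [hδ0]; field_simp
  refine ⟨mul_right_cancel₀ hβh.ne' ?_, hβhδ0⟩
  linear_combination -heig - hABR - (A - lam) * hβhδ0

theorem lower_solution_exists_general
    (βv βh rv dh γh Nv Nh q Dv Dh h0 : ℝ)
    (hβv : 0 < βv) (hβh : 0 < βh) (hrv : 0 < rv) (hdh : 0 < dh) (hγh : 0 < γh)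
    (hNh : 0 < Nh) (hq1 : q < 1)
    (hDv : 0 < Dv) (hDh : 0 < Dh)
    (lamStar A B Rstar lam0 δ0 : ℝ)
    (hlam : lamStar = (Real.pi / (2 * h0)) ^ 2)
    (hA : A = Dv * lamStar + rv * (1 - q))
    (hB : B = Dh * lamStar + dh + γh)
    (hRstar : Rstar = (βv * βh * Nv / Nh) / (A * B))
    (hRgt1 : 1 < Rstar)
    (hlam0 : lam0 = ((A + B) - Real.sqrt ((A + B) ^ 2 + 4 * A * B * (Rstar - 1))) / 2)
    (hlam0neg : lam0 < 0)
    (hδ0 : δ0 = (B - lam0) / βh) (hδ0pos : 0 < δ0)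
    (ψ φ : ℝ → ℝ)
    (hψ : ψ = fun x => Real.cos (Real.pi * x / (2 * h0)))
    (hφ : φ = fun x => δ0 * ψ x) :
    ∃ δ1 : ℝ, 0 < δ1 ∧
      ∀ δ : ℝ, 0 < δ → δ ≤ δ1 → ∀ x ∈ Set.Ioo (-h0) h0,
        -Dv * deriv (deriv (fun y => δ * φ y)) x ≤
          βv * (Nv - δ * φ x) * (δ * ψ x) / Nh - rv * (1 - q) * (δ * φ x) ∧
        -Dh * deriv (deriv (fun y => δ * ψ y)) x ≤
          βh * (δ * φ x) * (Nh - δ * ψ x) / Nh - (dh + γh) * (δ * ψ x) := by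
  set k := π / (2 * h0) with hk
  have hψk (y : ℝ) : ψ y = cos (k * y) := by simp only [hψ, hk, mul_div_right_comm]
  have hA0 : 0 < A := by
    rw [hA, hlam]; exact add_pos_of_nonneg_of_pos (by positivity) (mul_pos hrv (sub_pos.2 hq1))
  have hB0 : 0 < B := by rw [hB, hlam]; positivity
  obtain ⟨hmosq, hbird⟩ :=
    eigenvector_of_smaller_root hA0 hB0 hβh hRgt1 hRstar hlam0 hδ0
  have hM : 0 < -lam0 * Nh := mul_pos (neg_pos.2 hlam0neg) hNh
  refine ⟨min (-lam0 * Nh / βv) (-lam0 * Nh / (βh * δ0)),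
    lt_min (div_pos hM hβv) (div_pos hM (mul_pos hβh hδ0pos)), fun δ hδ hδ1 x hx => ?_⟩
  have hs0 : 0 < ψ x := by rw [hψ]; exact cos_pi_mul_div_pos hx
  have hδs : δ * ψ x ≤ δ := mul_le_of_le_one_right hδ.le (by rw [hψk]; exact cos_le_one _)
  have hsmall {β : ℝ} (hβ : 0 < β) (hδβ : δ ≤ -lam0 * Nh / β) : β * (δ * ψ x) ≤ -lam0 * Nh :=
    (mul_le_mul_of_nonneg_left hδs hβ.le).trans ((le_div_iff₀' hβ).1 hδβ)
  have hsmall_v := hsmall hβv (hδ1.trans (min_le_left _ _))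
  have hsmall_h := hsmall (mul_pos hβh hδ0pos) (hδ1.trans (min_le_right _ _))
  have hdφ : deriv (deriv fun y => δ * φ y) x = -(δ * δ0 * k ^ 2) * ψ x := by
    simp only [hφ, hψk, ← mul_assoc, deriv_deriv_const_mul_cos]
  have hdψ : deriv (deriv fun y => δ * ψ y) x = -(δ * k ^ 2) * ψ x := by
    simp only [hψk, deriv_deriv_const_mul_cos]
  rw [hdφ, hdψ]; simp only [hφ]
  constructor
  · calc _ = A * (δ * (δ0 * ψ x)) - rv * (1 - q) * (δ * (δ0 * ψ x)) := by rw [hA, hlam]; ring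
      _ ≤ (A - lam0) * (δ * (δ0 * ψ x)) - βv * (δ * ψ x) * (δ * (δ0 * ψ x)) / Nh
            - rv * (1 - q) * (δ * (δ0 * ψ x)) := by
          gcongr; exact mul_le_sub_mul_sub_mul_div hNh (by positivity) hsmall_v
      _ = _ := by linear_combination -(δ * ψ x) * hmosq
  · calc _ = B * (δ * ψ x) - (dh + γh) * (δ * ψ x) := by rw [hB, hlam]; ring
      _ ≤ (B - lam0) * (δ * ψ x) - βh * δ0 * (δ * ψ x) * (δ * ψ x) / Nh
            - (dh + γh) * (δ * ψ x) := by
          gcongr; exact mul_le_sub_mul_sub_mul_div hNh (by positivity) hsmall_h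
      _ = _ := by rw [← hbird]; field_simp

/-- When `R* > 1`, for all sufficiently small `δ > 0` the
stationary pair `(δφ, δψ)` is a lower solution of the West Nile virus system
on `(-h₀, h₀)`. -/
theorem lower_solution_exists
    (βv βh rv dh γh Nv Nh q Dv Dh h0 : ℝ)
    (hβv : 0 < βv) (hβh : 0 < βh) (hrv : 0 < rv) (hdh : 0 < dh) (hγh : 0 < γh)
    (hNv : 0 < Nv) (hNh : 0 < Nh) (hq0 : 0 ≤ q) (hq1 : q < 1)
    (hDv : 0 < Dv) (hDh : 0 < Dh) (hh0 : 0 < h0)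
    (lamStar A B Rstar lam0 δ0 : ℝ)
    (hlam : lamStar = (Real.pi / (2 * h0)) ^ 2)
    (hA : A = Dv * lamStar + rv * (1 - q))
    (hB : B = Dh * lamStar + dh + γh)
    (hRstar : Rstar = (βv * βh * Nv / Nh) / (A * B))
    (hRgt1 : 1 < Rstar)
    (hlam0 : lam0 = ((A + B) - Real.sqrt ((A + B) ^ 2 + 4 * A * B * (Rstar - 1))) / 2)
    (hlam0neg : lam0 < 0)
    (hδ0 : δ0 = (B - lam0) / βh) (hδ0pos : 0 < δ0)
    (ψ φ : ℝ → ℝ)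
    (hψ : ψ = fun x => Real.cos (Real.pi * x / (2 * h0)))
    (hφ : φ = fun x => δ0 * ψ x) :
    ∃ δ1 : ℝ, 0 < δ1 ∧
      ∀ δ : ℝ, 0 < δ → δ ≤ δ1 → ∀ x ∈ Set.Ioo (-h0) h0,
        -Dv * deriv (deriv (fun y => δ * φ y)) x ≤
          βv * (Nv - δ * φ x) * (δ * ψ x) / Nh - rv * (1 - q) * (δ * φ x) ∧
        -Dh * deriv (deriv (fun y => δ * ψ y)) x ≤
          βh * (δ * φ x) * (Nh - δ * ψ x) / Nh - (dh + γh) * (δ * ψ x) :=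
  lower_solution_exists_general βv βh rv dh γh Nv Nh q Dv Dh h0 hβv hβh hrv hdh hγh hNh hq1 hDv hDh
    lamStar A B Rstar lam0 δ0 hlam hA hB hRstar hRgt1 hlam0 hlam0neg hδ0 hδ0pos ψ φ hψ hφ
end
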